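/- arXiv:2112.08203 — 2 statements merged into one kernel-verified Lean document; each statement's English description precedes it below -/
import Mathlib

section
/- Let F : ℝ^n × 𝒫₂ × ℝ^m → ℝ^{n×n} satisfy the local Lipschitz estimate ‖F(x₁,μ₁,y₁) − F(x₂,μ₂,y₂)‖ ≤ C(1 + |y₁|² + |y₂|²)(|x₁−x₂| + 𝕎₂(μ₁,μ₂) + |y₁−y₂|). Suppose for each (x,μ) there is a probability measure ν^{x,μ} on ℝ^m with sup_{x,μ} ∫ |y|⁶ ν^{x,μ}(dy) < ∞, and that there exist β > 0, C > 0 and a process Y^{x,μ,y} with sup_{x,μ} 𝔼|Y_t^{x,μ,y}|⁶ ≤ e^{−βt}|y|⁶ + C and 𝔼|Y_t^{x,μ,y₁} − Y_t^{x,μ,y₂}|² ≤ e^{−βt}|y₁−y₂|², and such that ν^{x,μ} is invariant for Y^{x,μ,·}. Define F̄(x,μ) = ∫ F(x,μ,y) ν^{x,μ}(dy). Then for all t > 0 and y: ‖𝔼 F(x,μ,Y_t^{x,μ,y}) − F̄(x,μ)‖ ≤ C' e^{−βt/2}(1 + |y|³). -/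
set_option maxHeartbeats 1000000

open MeasureTheory

lemma aux_pow_le (s : ℝ) (hs : 0 ≤ s) {j k : ℕ} (h : j ≤ k) : s ^ j ≤ 1 + s ^ k := by
  rcases le_total s 1 with h1 | h1
  · have := pow_le_one₀ hs h1 (n := j)
    have : (0:ℝ) ≤ s ^ k := pow_nonneg hs k
    linarith [pow_le_one₀ hs h1 (n := j)]
  · have := pow_le_pow_right₀ h1 h
    have : (0:ℝ) ≤ s ^ k := pow_nonneg hs k
    linarith [pow_le_pow_right₀ h1 h]

lemma aux_mul_pow (a b : ℝ) (ha : 0 ≤ a) (hb : 0 ≤ b) {j k N : ℕ} (hjk : j + k = N) :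
    a ^ j * b ^ k ≤ a ^ N + b ^ N := by
  rcases le_total a b with h | h
  · have h1 : a ^ j * b ^ k ≤ b ^ j * b ^ k :=
      mul_le_mul_of_nonneg_right (pow_le_pow_left₀ ha h j) (pow_nonneg hb k)
    have h2 : b ^ j * b ^ k = b ^ N := by rw [← pow_add, hjk]
    nlinarith [pow_nonneg ha N]
  · have h1 : a ^ j * b ^ k ≤ a ^ j * a ^ k :=
      mul_le_mul_of_nonneg_left (pow_le_pow_left₀ hb h k) (pow_nonneg ha j)
    have h2 : a ^ j * a ^ k = a ^ N := by rw [← pow_add, hjk]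
    nlinarith [pow_nonneg hb N]

lemma aux_young (a b γ : ℝ) (hγ : 0 < γ) : a * b ≤ (γ * a ^ 2 + b ^ 2 / γ) / 2 := by
  rw [← sub_nonneg]
  have key : (γ * a ^ 2 + b ^ 2 / γ) / 2 - a * b = (γ * a - b) ^ 2 / (2 * γ) := by
    field_simp; ring
  rw [key]; positivity

lemma aux4 (s lam : ℝ) (hs : 0 ≤ s) (hlam : 0 < lam) :
    s ^ 4 ≤ lam * s ^ 6 + 1 / lam ^ 2 := by
  have hu : 0 ≤ lam * s ^ 2 := by positivity
  have h1 : (lam * s ^ 2) ^ 2 ≤ (lam * s ^ 2) ^ 3 + 1 := by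
    rcases le_total (lam * s ^ 2) 1 with h | h
    · nlinarith
    · nlinarith
  rw [← sub_nonneg]
  have key : lam * s ^ 6 + 1 / lam ^ 2 - s ^ 4
      = ((lam * s ^ 2) ^ 3 + 1 - (lam * s ^ 2) ^ 2) / lam ^ 2 := by
    field_simp
  rw [key]
  exact div_nonneg (by linarith) (by positivity)

lemma aux_P1 (a b : ℝ) (ha : 0 ≤ a) (hb : 0 ≤ b) :
    (1 + a + b) * (1 + a ^ 4 + b ^ 4) ≤ 9 * ((1 + a ^ 2 + b ^ 2) * ((1 + a ^ 3) * (1 + b ^ 3))) := by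
  have h1 : (1 + a + b) * (1 + a ^ 4 + b ^ 4) ≤ 9 * (1 + a ^ 5 + b ^ 5) := by
    nlinarith [aux_pow_le a ha (show 1 ≤ 5 by norm_num), aux_pow_le b hb (show 1 ≤ 5 by norm_num),
      aux_pow_le a ha (show 4 ≤ 5 by norm_num), aux_pow_le b hb (show 4 ≤ 5 by norm_num),
      aux_mul_pow a b ha hb (show 1 + 4 = 5 by norm_num),
      aux_mul_pow b a hb ha (show 1 + 4 = 5 by norm_num), pow_nonneg ha 5, pow_nonneg hb 5]
  have h2 : 1 + a ^ 5 + b ^ 5 ≤ (1 + a ^ 2 + b ^ 2) * ((1 + a ^ 3) * (1 + b ^ 3)) := by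
    nlinarith [pow_nonneg ha 2, pow_nonneg hb 2, pow_nonneg ha 3, pow_nonneg hb 3,
      mul_nonneg (pow_nonneg ha 3) (pow_nonneg hb 3),
      mul_nonneg (pow_nonneg ha 2) (pow_nonneg hb 3),
      mul_nonneg (pow_nonneg ha 3) (pow_nonneg hb 2),
      mul_nonneg (mul_nonneg (pow_nonneg ha 2) (pow_nonneg ha 3)) (pow_nonneg hb 3),
      mul_nonneg (mul_nonneg (pow_nonneg hb 2) (pow_nonneg ha 3)) (pow_nonneg hb 3)]
  linarith

lemma aux_P2 (a b : ℝ) (ha : 0 ≤ a) (hb : 0 ≤ b) :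
    (1 + a + b) * (1 + a ^ 2 + b ^ 2) ≤ 9 * ((1 + a ^ 3) * (1 + b ^ 3)) := by
  have h1 : a ^ 2 * b ≤ a ^ 3 + b ^ 3 := by
    have := aux_mul_pow a b ha hb (show 2 + 1 = 3 from rfl)
    simpa using this
  have h2 : b ^ 2 * a ≤ a ^ 3 + b ^ 3 := by
    have := aux_mul_pow b a hb ha (show 2 + 1 = 3 from rfl)
    linarith
  nlinarith [aux_pow_le a ha (show 1 ≤ 3 by norm_num), aux_pow_le b hb (show 1 ≤ 3 by norm_num),
    aux_pow_le a ha (show 2 ≤ 3 by norm_num), aux_pow_le b hb (show 2 ≤ 3 by norm_num),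
    pow_nonneg ha 3, pow_nonneg hb 3, mul_nonneg (pow_nonneg ha 3) (pow_nonneg hb 3)]

lemma aux_sq3 (p q : ℝ) : (1 + p ^ 2 + q ^ 2) ^ 2 ≤ 3 * (1 + p ^ 4 + q ^ 4) := by
  nlinarith [sq_nonneg (p ^ 2 - q ^ 2), sq_nonneg (p ^ 2 - 1), sq_nonneg (q ^ 2 - 1)]

/-- exponential ergodicity estimate
`‖𝔼F(x,μ,Y_t^{x,μ,y}) − F̄(x,μ)‖ ≤ C' e^{−βt/2}(1 + |y|³)` for a locally
Lipschitz (with quadratic weight) function `F`, where `F̄(x,μ) = ∫ F dν^{x,μ}`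
and `ν^{x,μ}` is an invariant measure (with uniformly bounded sixth moments) of
the frozen process `Y^{x,μ,·}`, which has uniform sixth moment bounds and is
exponentially contracting in the initial condition. -/
theorem stmt_6 {n m : ℕ} {P V : Type*} [PseudoMetricSpace P]
    [NormedAddCommGroup V] [NormedSpace ℝ V]
    {Ω : Type*} [MeasurableSpace Ω] (ℙ : Measure Ω) [IsProbabilityMeasure ℙ]
    (F : EuclideanSpace ℝ (Fin n) → P → EuclideanSpace ℝ (Fin m) → V)
    (ν : EuclideanSpace ℝ (Fin n) → P → Measure (EuclideanSpace ℝ (Fin m)))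
    (Y : EuclideanSpace ℝ (Fin n) → P → EuclideanSpace ℝ (Fin m) → ℝ → Ω →
      EuclideanSpace ℝ (Fin m))
    (C β : ℝ) (hC : 0 < C) (hβ : 0 < β)
    (hνprob : ∀ x μ, IsProbabilityMeasure (ν x μ))
    (hFlip : ∀ x₁ x₂ : EuclideanSpace ℝ (Fin n), ∀ μ₁ μ₂ : P,
      ∀ y₁ y₂ : EuclideanSpace ℝ (Fin m),
      ‖F x₁ μ₁ y₁ - F x₂ μ₂ y₂‖ ≤
        C * (1 + ‖y₁‖ ^ 2 + ‖y₂‖ ^ 2) * (‖x₁ - x₂‖ + dist μ₁ μ₂ + ‖y₁ - y₂‖))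
    (hν6int : ∀ x μ, Integrable (fun y => ‖y‖ ^ 6) (ν x μ))
    (hν6 : ∀ x μ, (∫ y, ‖y‖ ^ 6 ∂(ν x μ)) ≤ C)
    (hY6 : ∀ x μ y, ∀ t, 0 ≤ t →
      (∫ ω, ‖Y x μ y t ω‖ ^ 6 ∂ℙ) ≤ Real.exp (-β * t) * ‖y‖ ^ 6 + C)
    (hY6int : ∀ x μ y, ∀ t, 0 ≤ t → Integrable (fun ω => ‖Y x μ y t ω‖ ^ 6) ℙ)
    (hcontr : ∀ x μ, ∀ y₁ y₂ : EuclideanSpace ℝ (Fin m), ∀ t, 0 ≤ t →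
      (∫ ω, ‖Y x μ y₁ t ω - Y x μ y₂ t ω‖ ^ 2 ∂ℙ) ≤ Real.exp (-β * t) * ‖y₁ - y₂‖ ^ 2)
    (hcontrint : ∀ x μ, ∀ y₁ y₂ : EuclideanSpace ℝ (Fin m), ∀ t, 0 ≤ t →
      Integrable (fun ω => ‖Y x μ y₁ t ω - Y x μ y₂ t ω‖ ^ 2) ℙ)
    (hFint : ∀ x μ y, ∀ t, 0 ≤ t → Integrable (fun ω => F x μ (Y x μ y t ω)) ℙ)
    (hFνint : ∀ x μ, Integrable (fun y => F x μ y) (ν x μ))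
    (hEFνint : ∀ x μ, ∀ t, 0 ≤ t →
      Integrable (fun z => ∫ ω, F x μ (Y x μ z t ω) ∂ℙ) (ν x μ))
    (hYmeas : ∀ x μ y t, Measurable (Y x μ y t))
    (hinv : ∀ x μ, ∀ φ : EuclideanSpace ℝ (Fin m) → ℝ, Measurable φ →
      (∃ B, ∀ y, |φ y| ≤ B) → ∀ t, 0 ≤ t →
      (∫ z, (∫ ω, φ (Y x μ z t ω) ∂ℙ) ∂(ν x μ)) = ∫ z, φ z ∂(ν x μ)) :
    ∃ C' > (0:ℝ), ∀ x : EuclideanSpace ℝ (Fin n), ∀ μ : P,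
      ∀ y : EuclideanSpace ℝ (Fin m), ∀ t, 0 < t →
        ‖(∫ ω, F x μ (Y x μ y t ω) ∂ℙ) - ∫ z, F x μ z ∂(ν x μ)‖ ≤
          C' * Real.exp (-β * t / 2) * (1 + ‖y‖ ^ 3) := by
  refine ⟨5 * C * (9 * C + 28) * (2 + C), by positivity, fun x μ y t ht => ?_⟩
  by_cases hV : CompleteSpace V
  · haveI := hV
    haveI := hνprob x μ
    have ht' : (0:ℝ) ≤ t := ht.le
    set E := Real.exp (-β * t / 2) with hEdef
    have hE : 0 < E := Real.exp_pos _
    have hE2 : Real.exp (-β * t) = E ^ 2 := by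
      rw [hEdef, sq, ← Real.exp_add]
      congr 1; ring
    set C₁ : ℝ := 5 * C * (9 * C + 28) with hC₁def
    have hC₁ : 0 < C₁ := by positivity
    -- integrability of powers of the process
    have hIntPow : ∀ (y' : EuclideanSpace ℝ (Fin m)) (k : ℕ), k ≤ 6 →
        Integrable (fun ω => ‖Y x μ y' t ω‖ ^ k) ℙ := by
      intro y' k hk
      refine ((integrable_const (1:ℝ)).add (hY6int x μ y' t ht')).mono'
        ((hYmeas x μ y' t).norm.pow_const k).aestronglyMeasurable
        (Filter.Eventually.of_forall fun ω => ?_)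
      rw [Real.norm_eq_abs, abs_of_nonneg (by positivity)]
      exact aux_pow_le _ (norm_nonneg _) hk
    -- fourth moment bound
    have h4 : ∀ y' : EuclideanSpace ℝ (Fin m),
        (∫ ω, ‖Y x μ y' t ω‖ ^ 4 ∂ℙ) ≤ (C + 3) * (1 + ‖y'‖ ^ 4) := by
      intro y'
      set a := ‖y'‖ with hadef
      have ha : 0 ≤ a := norm_nonneg _
      have hvpos : (0:ℝ) < 1 + a ^ 2 := by positivity
      set lam : ℝ := (1 + a ^ 2)⁻¹ with hlamdef
      have hlam : 0 < lam := by positivity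
      have hpt : ∀ ω, ‖Y x μ y' t ω‖ ^ 4 ≤ lam * ‖Y x μ y' t ω‖ ^ 6 + (1 + a ^ 2) ^ 2 := by
        intro ω
        have h := aux4 ‖Y x μ y' t ω‖ lam (norm_nonneg _) hlam
        have he : 1 / lam ^ 2 = (1 + a ^ 2) ^ 2 := by
          rw [hlamdef]; field_simp
        linarith [h, he.le, he.ge]
      have h1 : (∫ ω, ‖Y x μ y' t ω‖ ^ 4 ∂ℙ)
          ≤ ∫ ω, (lam * ‖Y x μ y' t ω‖ ^ 6 + (1 + a ^ 2) ^ 2) ∂ℙ := by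
        exact integral_mono (hIntPow y' 4 (by norm_num))
          (((hY6int x μ y' t ht').const_mul lam).add (integrable_const _)) hpt
      have h2 : (∫ ω, (lam * ‖Y x μ y' t ω‖ ^ 6 + (1 + a ^ 2) ^ 2) ∂ℙ)
          = lam * (∫ ω, ‖Y x μ y' t ω‖ ^ 6 ∂ℙ) + (1 + a ^ 2) ^ 2 := by
        rw [integral_add ((hY6int x μ y' t ht').const_mul lam) (integrable_const _),
          integral_const_mul, integral_const]
        simp [measure_univ]
      have h3 : (∫ ω, ‖Y x μ y' t ω‖ ^ 6 ∂ℙ) ≤ a ^ 6 + C := by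
        have := hY6 x μ y' t ht'
        have hexp : Real.exp (-β * t) ≤ 1 := by
          rw [show (1:ℝ) = Real.exp 0 by simp]
          exact Real.exp_le_exp.mpr (by nlinarith)
        nlinarith [pow_nonneg ha 6]
      have hkey : lam * (a ^ 6 + C) + (1 + a ^ 2) ^ 2 ≤ (C + 3) * (1 + a ^ 4) := by
        have hmul : lam * (1 + a ^ 2) = 1 := by
          rw [hlamdef]; field_simp
        have h5 : lam * a ^ 6 ≤ a ^ 4 := by nlinarith [mul_nonneg hlam.le (pow_nonneg ha 4)]
        have h6 : lam * C ≤ C := by nlinarith [mul_nonneg hlam.le (sq_nonneg a)]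
        nlinarith [sq_nonneg (a ^ 2 - 1), pow_nonneg ha 4]
      have hmono : lam * (∫ ω, ‖Y x μ y' t ω‖ ^ 6 ∂ℙ) ≤ lam * (a ^ 6 + C) :=
        mul_le_mul_of_nonneg_left h3 hlam.le
      linarith
    -- Step A : contraction estimate between two initial points
    have stepA : ∀ y₁ y₂ : EuclideanSpace ℝ (Fin m),
        ‖(∫ ω, F x μ (Y x μ y₁ t ω) ∂ℙ) - ∫ ω, F x μ (Y x μ y₂ t ω) ∂ℙ‖ ≤
          C₁ * E * (1 + ‖y₁‖ ^ 3) * (1 + ‖y₂‖ ^ 3) := by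
      intro y₁ y₂
      have ha : (0:ℝ) ≤ ‖y₁‖ := norm_nonneg _
      have hb : (0:ℝ) ≤ ‖y₂‖ := norm_nonneg _
      set a := ‖y₁‖ with hadef
      set b := ‖y₂‖ with hbdef
      have hv : (0:ℝ) < 1 + a ^ 2 + b ^ 2 := by positivity
      have hu : (0:ℝ) < 1 + a + b := by positivity
      set γ : ℝ := E * (1 + a + b) / (1 + a ^ 2 + b ^ 2) with hγdef
      have hγ : 0 < γ := by positivity
      have hW2bnd : Integrable
          (fun ω => (3:ℝ) * (1 + ‖Y x μ y₁ t ω‖ ^ 4 + ‖Y x μ y₂ t ω‖ ^ 4)) ℙ :=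
        (((integrable_const (1:ℝ)).add (hIntPow y₁ 4 (by norm_num))).add
          (hIntPow y₂ 4 (by norm_num))).const_mul 3
      have hWptb : ∀ ω, ((1:ℝ) + ‖Y x μ y₁ t ω‖ ^ 2 + ‖Y x μ y₂ t ω‖ ^ 2) ^ 2
          ≤ (3:ℝ) * (1 + ‖Y x μ y₁ t ω‖ ^ 4 + ‖Y x μ y₂ t ω‖ ^ 4) := fun ω =>
        aux_sq3 _ _
      have hW2int : Integrable
          (fun ω => ((1:ℝ) + ‖Y x μ y₁ t ω‖ ^ 2 + ‖Y x μ y₂ t ω‖ ^ 2) ^ 2) ℙ := by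
        refine hW2bnd.mono'
          (((measurable_const.add ((hYmeas x μ y₁ t).norm.pow_const 2)).add
            ((hYmeas x μ y₂ t).norm.pow_const 2)).pow_const 2).aestronglyMeasurable
          (Filter.Eventually.of_forall fun ω => ?_)
        rw [Real.norm_eq_abs, abs_of_nonneg (by positivity)]
        exact hWptb ω
      have hd2int := hcontrint x μ y₁ y₂ t ht'
      have hpt : ∀ ω, ‖F x μ (Y x μ y₁ t ω) - F x μ (Y x μ y₂ t ω)‖ ≤
          (C / 2) * (γ * ((1 + ‖Y x μ y₁ t ω‖ ^ 2 + ‖Y x μ y₂ t ω‖ ^ 2) ^ 2)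
            + ‖Y x μ y₁ t ω - Y x μ y₂ t ω‖ ^ 2 / γ) := by
        intro ω
        have h1 := hFlip x x μ μ (Y x μ y₁ t ω) (Y x μ y₂ t ω)
        simp only [sub_self, norm_zero, dist_self, zero_add] at h1
        have h2 := aux_young (1 + ‖Y x μ y₁ t ω‖ ^ 2 + ‖Y x μ y₂ t ω‖ ^ 2)
          (‖Y x μ y₁ t ω - Y x μ y₂ t ω‖) γ hγ
        nlinarith [h1, mul_le_mul_of_nonneg_left h2 hC.le]
      have key1 : ‖(∫ ω, F x μ (Y x μ y₁ t ω) ∂ℙ) - ∫ ω, F x μ (Y x μ y₂ t ω) ∂ℙ‖ ≤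
          ∫ ω, ((C / 2) * (γ * ((1 + ‖Y x μ y₁ t ω‖ ^ 2 + ‖Y x μ y₂ t ω‖ ^ 2) ^ 2)
            + ‖Y x μ y₁ t ω - Y x μ y₂ t ω‖ ^ 2 / γ)) ∂ℙ := by
        rw [← integral_sub (hFint x μ y₁ t ht') (hFint x μ y₂ t ht')]
        refine (norm_integral_le_integral_norm _).trans ?_
        refine integral_mono_of_nonneg
          (Filter.Eventually.of_forall fun ω => norm_nonneg _) ?_
          (Filter.Eventually.of_forall hpt)
        exact (((hW2int.const_mul γ).add (hd2int.div_const γ)).const_mul (C / 2))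
      have key2 : (∫ ω, ((C / 2) * (γ * ((1 + ‖Y x μ y₁ t ω‖ ^ 2 + ‖Y x μ y₂ t ω‖ ^ 2) ^ 2)
            + ‖Y x μ y₁ t ω - Y x μ y₂ t ω‖ ^ 2 / γ)) ∂ℙ)
          = (C / 2) * (γ * (∫ ω, (1 + ‖Y x μ y₁ t ω‖ ^ 2 + ‖Y x μ y₂ t ω‖ ^ 2) ^ 2 ∂ℙ)
            + (∫ ω, ‖Y x μ y₁ t ω - Y x μ y₂ t ω‖ ^ 2 ∂ℙ) / γ) := by
        rw [integral_const_mul, integral_add (hW2int.const_mul γ) (hd2int.div_const γ),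
          integral_const_mul, integral_div]
      have hW2 : (∫ ω, (1 + ‖Y x μ y₁ t ω‖ ^ 2 + ‖Y x μ y₂ t ω‖ ^ 2) ^ 2 ∂ℙ)
          ≤ 9 * (C + 3) * (1 + a ^ 4 + b ^ 4) := by
        have h1 : (∫ ω, (1 + ‖Y x μ y₁ t ω‖ ^ 2 + ‖Y x μ y₂ t ω‖ ^ 2) ^ 2 ∂ℙ)
            ≤ ∫ ω, ((3:ℝ) * (1 + ‖Y x μ y₁ t ω‖ ^ 4 + ‖Y x μ y₂ t ω‖ ^ 4)) ∂ℙ :=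
          integral_mono hW2int hW2bnd hWptb
        have h2 : (∫ ω, ((3:ℝ) * (1 + ‖Y x μ y₁ t ω‖ ^ 4 + ‖Y x μ y₂ t ω‖ ^ 4)) ∂ℙ)
            = 3 * (1 + (∫ ω, ‖Y x μ y₁ t ω‖ ^ 4 ∂ℙ) + ∫ ω, ‖Y x μ y₂ t ω‖ ^ 4 ∂ℙ) := by
          have hint1 : Integrable (fun ω => (1:ℝ) + ‖Y x μ y₁ t ω‖ ^ 4) ℙ :=
            (integrable_const 1).add (hIntPow y₁ 4 (by norm_num))
          rw [integral_const_mul, integral_add hint1 (hIntPow y₂ 4 (by norm_num)),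
            integral_add (integrable_const (1:ℝ)) (hIntPow y₁ 4 (by norm_num)),
            integral_const]
          simp [measure_univ]
        have h3 := h4 y₁
        have h4' := h4 y₂
        have h5 : (0:ℝ) ≤ a ^ 4 := pow_nonneg ha 4
        have h6 : (0:ℝ) ≤ b ^ 4 := pow_nonneg hb 4
        nlinarith [h1, h2, h3, h4']
      have hd2 : (∫ ω, ‖Y x μ y₁ t ω - Y x μ y₂ t ω‖ ^ 2 ∂ℙ) ≤ E ^ 2 * (1 + a + b) ^ 2 := by
        have h1 := hcontr x μ y₁ y₂ t ht'
        rw [hE2] at h1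
        have h2 : ‖y₁ - y₂‖ ≤ a + b := norm_sub_le _ _
        have h3 : ‖y₁ - y₂‖ ^ 2 ≤ (1 + a + b) ^ 2 := by
          nlinarith [norm_nonneg (y₁ - y₂)]
        nlinarith [sq_nonneg E, h1]
      have hγA2 : γ * (9 * (C + 3) * (1 + a ^ 4 + b ^ 4))
          ≤ E * (81 * (C + 3) * ((1 + a ^ 3) * (1 + b ^ 3))) := by
        rw [hγdef, div_mul_eq_mul_div, div_le_iff₀ hv]
        nlinarith [mul_le_mul_of_nonneg_left (aux_P1 a b ha hb)
          (show (0:ℝ) ≤ E * (9 * (C + 3)) by positivity)]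
      have hB3 : (E ^ 2 * (1 + a + b) ^ 2) / γ = E * ((1 + a + b) * (1 + a ^ 2 + b ^ 2)) := by
        rw [hγdef]
        field_simp
      have hB4 : E * ((1 + a + b) * (1 + a ^ 2 + b ^ 2)) ≤ E * (9 * ((1 + a ^ 3) * (1 + b ^ 3))) :=
        mul_le_mul_of_nonneg_left (aux_P2 a b ha hb) hE.le
      have hsum : γ * (∫ ω, (1 + ‖Y x μ y₁ t ω‖ ^ 2 + ‖Y x μ y₂ t ω‖ ^ 2) ^ 2 ∂ℙ)
            + (∫ ω, ‖Y x μ y₁ t ω - Y x μ y₂ t ω‖ ^ 2 ∂ℙ) / γ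
          ≤ E * (81 * (C + 3) * ((1 + a ^ 3) * (1 + b ^ 3)))
            + E * (9 * ((1 + a ^ 3) * (1 + b ^ 3))) := by
        have hA := (mul_le_mul_of_nonneg_left hW2 hγ.le).trans hγA2
        have hB := (((div_le_div_iff_of_pos_right hγ).mpr hd2).trans_eq hB3).trans hB4
        linarith
      calc ‖(∫ ω, F x μ (Y x μ y₁ t ω) ∂ℙ) - ∫ ω, F x μ (Y x μ y₂ t ω) ∂ℙ‖
          ≤ (C / 2) * (γ * (∫ ω, (1 + ‖Y x μ y₁ t ω‖ ^ 2 + ‖Y x μ y₂ t ω‖ ^ 2) ^ 2 ∂ℙ)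
            + (∫ ω, ‖Y x μ y₁ t ω - Y x μ y₂ t ω‖ ^ 2 ∂ℙ) / γ) := key1.trans (le_of_eq key2)
        _ ≤ (C / 2) * (E * (81 * (C + 3) * ((1 + a ^ 3) * (1 + b ^ 3)))
            + E * (9 * ((1 + a ^ 3) * (1 + b ^ 3)))) :=
          mul_le_mul_of_nonneg_left hsum (by positivity)
        _ ≤ C₁ * E * (1 + a ^ 3) * (1 + b ^ 3) := by
          rw [hC₁def]
          nlinarith [mul_nonneg (mul_nonneg hE.le (show (0:ℝ) ≤ 1 + a ^ 3 by positivity))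
            (show (0:ℝ) ≤ 1 + b ^ 3 by positivity), hC]
    -- Step B : integrability of z ↦ E φ(Y_t^z) for bounded measurable φ
    have keyInt : ∀ φ : EuclideanSpace ℝ (Fin m) → ℝ, Measurable φ →
        (∃ B, ∀ y', |φ y'| ≤ B) →
        Integrable (fun z => ∫ ω, φ (Y x μ z t ω) ∂ℙ) (ν x μ) := by
      rintro φ hφm ⟨B, hB⟩
      by_contra hni
      have hφY : ∀ z, Integrable (fun ω => φ (Y x μ z t ω)) ℙ := fun z =>
        (integrable_const B).mono' ((hφm.comp (hYmeas x μ z t)).aestronglyMeasurable)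
          (Filter.Eventually.of_forall fun ω => by
            rw [Real.norm_eq_abs]; exact hB _)
      have h1 := hinv x μ φ hφm ⟨B, hB⟩ t ht'
      have h1' := hinv x μ (fun y' => φ y' + 1) (hφm.add_const 1)
        ⟨B + 1, fun y' => (abs_add_le _ _).trans (by
          have := hB y'
          simp only [abs_one]
          linarith)⟩ t ht'
      have hη : Integrable (fun z : EuclideanSpace ℝ (Fin m) => φ z) (ν x μ) :=
        (integrable_const B).mono' hφm.aestronglyMeasurable
          (Filter.Eventually.of_forall fun z => by rw [Real.norm_eq_abs]; exact hB _)
      have e1 : ∀ z, (∫ ω, (φ (Y x μ z t ω) + 1) ∂ℙ) = (∫ ω, φ (Y x μ z t ω) ∂ℙ) + 1 := by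
        intro z
        rw [integral_add (hφY z) (integrable_const 1), integral_const]
        simp [measure_univ]
      simp only [e1] at h1'
      have e2 : (∫ z, (φ z + 1) ∂(ν x μ)) = (∫ z, φ z ∂(ν x μ)) + 1 := by
        rw [integral_add hη (integrable_const 1), integral_const]
        simp [measure_univ]
      rw [e2] at h1'
      have hni' : ¬ Integrable (fun z => (∫ ω, φ (Y x μ z t ω) ∂ℙ) + 1) (ν x μ) := by
        intro h
        have h2 := h.sub (integrable_const (1:ℝ))
        refine hni (h2.congr (Filter.Eventually.of_forall fun z => ?_))
        simp
      rw [integral_undef hni] at h1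
      rw [integral_undef hni'] at h1'
      linarith
    have hν3int : Integrable (fun z : EuclideanSpace ℝ (Fin m) => 1 + ‖z‖ ^ 3) (ν x μ) := by
      refine ((integrable_const (2:ℝ)).add (hν6int x μ)).mono'
        (measurable_const.add (measurable_norm.pow_const 3)).aestronglyMeasurable
        (Filter.Eventually.of_forall fun z => ?_)
      rw [Real.norm_eq_abs, abs_of_nonneg (by positivity)]
      have := aux_pow_le ‖z‖ (norm_nonneg z) (show 3 ≤ 6 by norm_num)
      simp only [Pi.add_apply]
      linarith
    -- Step C : invariance for F
    have hinvF : (∫ z, (∫ ω, F x μ (Y x μ z t ω) ∂ℙ) ∂(ν x μ)) = ∫ z, F x μ z ∂(ν x μ) := by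
      have hcont : Continuous (F x μ) := by
        rw [Metric.continuous_iff]
        intro w ε hε
        set K : ℝ := C * (1 + (‖w‖ + 1) ^ 2 + ‖w‖ ^ 2) + 1 with hKdef
        have hK : 0 < K := by positivity
        refine ⟨min 1 (ε / K), by positivity, fun z hz => ?_⟩
        have h1 : dist z w < 1 := lt_of_lt_of_le hz (min_le_left _ _)
        have h2 : dist z w < ε / K := lt_of_lt_of_le hz (min_le_right _ _)
        have hzw : ‖z - w‖ = dist z w := (dist_eq_norm z w).symm
        have hnz : ‖z‖ ≤ ‖w‖ + 1 := by
          have h := norm_sub_norm_le z w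
          rw [hzw] at h
          linarith
        have h3 := hFlip x x μ μ z w
        simp only [sub_self, norm_zero, dist_self, zero_add] at h3
        rw [dist_eq_norm]
        have h4 : C * (1 + ‖z‖ ^ 2 + ‖w‖ ^ 2) ≤ K - 1 := by
          rw [hKdef]
          have h5 : ‖z‖ ^ 2 ≤ (‖w‖ + 1) ^ 2 := by nlinarith [norm_nonneg z, norm_nonneg w]
          nlinarith [hC]
        have h5 : ‖F x μ z - F x μ w‖ ≤ (K - 1) * ‖z - w‖ :=
          h3.trans (mul_le_mul_of_nonneg_right h4 (norm_nonneg _))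
        have h6 : (K - 1) * ‖z - w‖ ≤ K * dist z w := by
          rw [hzw]
          nlinarith [dist_nonneg (x := z) (y := w)]
        have h8 : K * (ε / K) = ε := by field_simp
        nlinarith [mul_lt_mul_of_pos_left h2 hK]
      set K₂ : ℝ := ‖F x μ 0‖ + 2 * C with hK₂def
      have hK₂ : 0 < K₂ := by positivity
      have hFg : ∀ z' : EuclideanSpace ℝ (Fin m), ‖F x μ z'‖ ≤ K₂ * (1 + ‖z'‖ ^ 3) := by
        intro z'
        have h1 := hFlip x x μ μ z' 0
        simp only [sub_self, norm_zero, dist_self, zero_add, sub_zero, add_zero] at h1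
        have h2 : ‖F x μ z'‖ - ‖F x μ 0‖ ≤ ‖F x μ z' - F x μ 0‖ := norm_sub_norm_le _ _
        have h3 := aux_pow_le ‖z'‖ (norm_nonneg z') (show 1 ≤ 3 by norm_num)
        rw [hK₂def]
        nlinarith [norm_nonneg z', pow_nonneg (norm_nonneg z') 3, norm_nonneg (F x μ 0), hC]
      refine (NormedSpace.eq_iff_forall_dual_eq ℝ).mpr fun L => ?_
      rw [← ContinuousLinearMap.integral_comp_comm L (hEFνint x μ t ht'),
        ← ContinuousLinearMap.integral_comp_comm L (hFνint x μ)]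
      have hJeq : ∀ z, L (∫ ω, F x μ (Y x μ z t ω) ∂ℙ) = ∫ ω, L (F x μ (Y x μ z t ω)) ∂ℙ :=
        fun z => (ContinuousLinearMap.integral_comp_comm L (hFint x μ z t ht')).symm
      simp only [hJeq]
      set g : EuclideanSpace ℝ (Fin m) → ℝ := fun z' => L (F x μ z') with hgdef
      have hgc : Continuous g := L.continuous.comp hcont
      have hgb : ∀ z', |g z'| ≤ ‖L‖ * (K₂ * (1 + ‖z'‖ ^ 3)) := by
        intro z'
        calc |g z'| = ‖L (F x μ z')‖ := (Real.norm_eq_abs _).symm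
          _ ≤ ‖L‖ * ‖F x μ z'‖ := L.le_opNorm _
          _ ≤ ‖L‖ * (K₂ * (1 + ‖z'‖ ^ 3)) :=
            mul_le_mul_of_nonneg_left (hFg z') (norm_nonneg L)
      set φ : ℕ → EuclideanSpace ℝ (Fin m) → ℝ :=
        fun k z' => max (-(k:ℝ)) (min (k:ℝ) (g z')) with hφdef
      have hφmeas : ∀ k, Measurable (φ k) := fun k =>
        measurable_const.max (measurable_const.min hgc.measurable)
      have hφbd : ∀ k : ℕ, ∀ z', |φ k z'| ≤ (k:ℝ) := by
        intro k z'
        rw [abs_le]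
        refine ⟨le_max_left _ _, max_le (neg_le_self (Nat.cast_nonneg k)) (min_le_left _ _)⟩
      have hφabs : ∀ (k : ℕ) (s : ℝ), |max (-(k:ℝ)) (min (k:ℝ) s)| ≤ |s| := by
        intro k s
        rw [abs_le]
        constructor
        · exact le_trans (le_min ((neg_nonpos.mpr (abs_nonneg s)).trans (Nat.cast_nonneg k))
            (neg_abs_le s)) (le_max_right _ _)
        · exact max_le ((neg_nonpos.mpr (Nat.cast_nonneg k)).trans (abs_nonneg s))
            ((min_le_right _ _).trans (le_abs_self s))
      have hφtend : ∀ s : ℝ, Filter.Tendsto (fun k : ℕ => max (-(k:ℝ)) (min (k:ℝ) s))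
          Filter.atTop (nhds s) := by
        intro s
        refine tendsto_atTop_of_eventually_const (i₀ := ⌈|s|⌉₊) fun k hk => ?_
        have h1 : |s| ≤ (k:ℝ) := (Nat.le_ceil _).trans (by exact_mod_cast hk)
        rw [abs_le] at h1
        rw [min_eq_right h1.2, max_eq_right h1.1]
      have hgY3int : ∀ z, Integrable (fun ω => ‖L‖ * (K₂ * (1 + ‖Y x μ z t ω‖ ^ 3))) ℙ :=
        fun z => (((integrable_const (1:ℝ)).add (hIntPow z 3 (by norm_num))).const_mul
          K₂).const_mul ‖L‖
      have hEY3 : ∀ z : EuclideanSpace ℝ (Fin m),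
          (∫ ω, ((1:ℝ) + ‖Y x μ z t ω‖ ^ 3) ∂ℙ) ≤ 2 + C + ‖z‖ ^ 6 := by
        intro z
        have h1 : (∫ ω, ((1:ℝ) + ‖Y x μ z t ω‖ ^ 3) ∂ℙ)
            ≤ ∫ ω, ((2:ℝ) + ‖Y x μ z t ω‖ ^ 6) ∂ℙ := by
          refine integral_mono ((integrable_const (1:ℝ)).add (hIntPow z 3 (by norm_num)))
            ((integrable_const (2:ℝ)).add (hY6int x μ z t ht')) fun ω => ?_
          have := aux_pow_le ‖Y x μ z t ω‖ (norm_nonneg _) (show 3 ≤ 6 by norm_num)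
          simp only [Pi.add_apply]
          linarith
        have h2 : (∫ ω, ((2:ℝ) + ‖Y x μ z t ω‖ ^ 6) ∂ℙ) = 2 + ∫ ω, ‖Y x μ z t ω‖ ^ 6 ∂ℙ := by
          rw [integral_add (integrable_const _) (hY6int x μ z t ht'), integral_const]
          simp [measure_univ]
        have h3 := hY6 x μ z t ht'
        have hexp : Real.exp (-β * t) ≤ 1 := by
          rw [show (1:ℝ) = Real.exp 0 by simp]
          exact Real.exp_le_exp.mpr (by nlinarith)
        have h4 : Real.exp (-β * t) * ‖z‖ ^ 6 ≤ ‖z‖ ^ 6 := by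
          nlinarith [pow_nonneg (norm_nonneg z) 6, (Real.exp_pos (-β * t)).le]
        linarith
      have hφYint : ∀ (k : ℕ) z, Integrable (fun ω => φ k (Y x μ z t ω)) ℙ := fun k z =>
        (integrable_const ((k:ℝ))).mono'
          (((hφmeas k).comp (hYmeas x μ z t)).aestronglyMeasurable)
          (Filter.Eventually.of_forall fun ω => by rw [Real.norm_eq_abs]; exact hφbd k _)
      have hinner : ∀ z, Filter.Tendsto (fun k : ℕ => ∫ ω, φ k (Y x μ z t ω) ∂ℙ)
          Filter.atTop (nhds (∫ ω, g (Y x μ z t ω) ∂ℙ)) := by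
        intro z
        refine tendsto_integral_of_dominated_convergence
          (fun ω => ‖L‖ * (K₂ * (1 + ‖Y x μ z t ω‖ ^ 3)))
          (fun k => ((hφmeas k).comp (hYmeas x μ z t)).aestronglyMeasurable)
          (hgY3int z)
          (fun k => Filter.Eventually.of_forall fun ω => ?_)
          (Filter.Eventually.of_forall fun ω => hφtend _)
        rw [Real.norm_eq_abs]
        exact (hφabs k _).trans (hgb _)
      have hν3int' : Integrable
          (fun z' : EuclideanSpace ℝ (Fin m) => ‖L‖ * (K₂ * (1 + ‖z'‖ ^ 3))) (ν x μ) :=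
        (hν3int.const_mul K₂).const_mul ‖L‖
      have hlim1 : Filter.Tendsto (fun k : ℕ => ∫ z', φ k z' ∂(ν x μ)) Filter.atTop
          (nhds (∫ z', g z' ∂(ν x μ))) := by
        refine tendsto_integral_of_dominated_convergence
          (fun z' => ‖L‖ * (K₂ * (1 + ‖z'‖ ^ 3)))
          (fun k => (hφmeas k).aestronglyMeasurable) hν3int'
          (fun k => Filter.Eventually.of_forall fun z' => ?_)
          (Filter.Eventually.of_forall fun z' => hφtend _)
        rw [Real.norm_eq_abs]
        exact (hφabs k _).trans (hgb z')
      have hbnd2int : Integrable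
          (fun z : EuclideanSpace ℝ (Fin m) => ‖L‖ * (K₂ * (2 + C + ‖z‖ ^ 6))) (ν x μ) :=
        ((((integrable_const ((2:ℝ) + C)).add (hν6int x μ)).const_mul K₂).const_mul ‖L‖)
      have hlim2 : Filter.Tendsto (fun k : ℕ => ∫ z, (∫ ω, φ k (Y x μ z t ω) ∂ℙ) ∂(ν x μ))
          Filter.atTop (nhds (∫ z, (∫ ω, g (Y x μ z t ω) ∂ℙ) ∂(ν x μ))) := by
        refine tendsto_integral_of_dominated_convergence
          (fun z => ‖L‖ * (K₂ * (2 + C + ‖z‖ ^ 6)))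
          (fun k => (keyInt (φ k) (hφmeas k) ⟨(k:ℝ), hφbd k⟩).aestronglyMeasurable)
          hbnd2int
          (fun k => Filter.Eventually.of_forall fun z => ?_)
          (Filter.Eventually.of_forall fun z => hinner z)
        refine (norm_integral_le_integral_norm _).trans ?_
        have hb1 : (∫ ω, ‖φ k (Y x μ z t ω)‖ ∂ℙ)
            ≤ ∫ ω, (‖L‖ * (K₂ * (1 + ‖Y x μ z t ω‖ ^ 3))) ∂ℙ := by
          refine integral_mono (hφYint k z).norm (hgY3int z) fun ω => ?_
          rw [Real.norm_eq_abs]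
          exact (hφabs k _).trans (hgb _)
        have hb2 : (∫ ω, (‖L‖ * (K₂ * (1 + ‖Y x μ z t ω‖ ^ 3))) ∂ℙ)
            = ‖L‖ * (K₂ * ∫ ω, ((1:ℝ) + ‖Y x μ z t ω‖ ^ 3) ∂ℙ) := by
          rw [integral_const_mul, integral_const_mul]
        have hb3 : ‖L‖ * (K₂ * (∫ ω, ((1:ℝ) + ‖Y x μ z t ω‖ ^ 3) ∂ℙ))
            ≤ ‖L‖ * (K₂ * (2 + C + ‖z‖ ^ 6)) :=
          mul_le_mul_of_nonneg_left (mul_le_mul_of_nonneg_left (hEY3 z) hK₂.le) (norm_nonneg L)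
        show (∫ ω, ‖φ k (Y x μ z t ω)‖ ∂ℙ) ≤ ‖L‖ * (K₂ * (2 + C + ‖z‖ ^ 6))
        linarith [hb2.le, hb2.ge]
      have heq : ∀ k : ℕ, (∫ z, (∫ ω, φ k (Y x μ z t ω) ∂ℙ) ∂(ν x μ)) = ∫ z', φ k z' ∂(ν x μ) :=
        fun k => hinv x μ (φ k) (hφmeas k) ⟨(k:ℝ), hφbd k⟩ t ht'
      exact tendsto_nhds_unique (Filter.Tendsto.congr heq hlim2) hlim1
    -- Step D : conclusion
    have hν3 : (∫ z, (1 + ‖z‖ ^ 3) ∂(ν x μ)) ≤ 2 + C := by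
      have h1 : (∫ z, (1 + ‖z‖ ^ 3) ∂(ν x μ)) ≤ ∫ z, ((2:ℝ) + ‖z‖ ^ 6) ∂(ν x μ) := by
        refine integral_mono hν3int ((integrable_const (2:ℝ)).add (hν6int x μ)) fun z => ?_
        have := aux_pow_le ‖z‖ (norm_nonneg z) (show 3 ≤ 6 by norm_num)
        simp only [Pi.add_apply]
        linarith
      have h2 : (∫ z, ((2:ℝ) + ‖z‖ ^ 6) ∂(ν x μ)) = 2 + ∫ z, ‖z‖ ^ 6 ∂(ν x μ) := by
        rw [integral_add (integrable_const _) (hν6int x μ), integral_const]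
        simp [measure_univ]
      have := hν6 x μ
      linarith
    calc ‖(∫ ω, F x μ (Y x μ y t ω) ∂ℙ) - ∫ z, F x μ z ∂(ν x μ)‖
        = ‖∫ z, ((∫ ω, F x μ (Y x μ y t ω) ∂ℙ) - ∫ ω, F x μ (Y x μ z t ω) ∂ℙ) ∂(ν x μ)‖ := by
          rw [integral_sub (integrable_const _) (hEFνint x μ t ht'), integral_const]
          simp [measure_univ, hinvF]
      _ ≤ ∫ z, ‖(∫ ω, F x μ (Y x μ y t ω) ∂ℙ) - ∫ ω, F x μ (Y x μ z t ω) ∂ℙ‖ ∂(ν x μ) :=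
          norm_integral_le_integral_norm _
      _ ≤ ∫ z, (C₁ * E * (1 + ‖y‖ ^ 3) * (1 + ‖z‖ ^ 3)) ∂(ν x μ) := by
          refine integral_mono ((integrable_const _).sub (hEFνint x μ t ht')).norm
            (hν3int.const_mul (C₁ * E * (1 + ‖y‖ ^ 3))) fun z => stepA y z
      _ = C₁ * E * (1 + ‖y‖ ^ 3) * ∫ z, (1 + ‖z‖ ^ 3) ∂(ν x μ) := integral_const_mul _ _
      _ ≤ C₁ * E * (1 + ‖y‖ ^ 3) * (2 + C) := by
          refine mul_le_mul_of_nonneg_left hν3 (by positivity)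
      _ = 5 * C * (9 * C + 28) * (2 + C) * Real.exp (-β * t / 2) * (1 + ‖y‖ ^ 3) := by
          rw [hC₁def, hEdef]; ring
  · have hz1 : (∫ ω, F x μ (Y x μ y t ω) ∂ℙ) = 0 := by
      rw [MeasureTheory.integral_def]; rw [dif_neg hV]
    have hz2 : (∫ z, F x μ z ∂(ν x μ)) = 0 := by
      rw [MeasureTheory.integral_def]; rw [dif_neg hV]
    rw [hz1, hz2, sub_zero, norm_zero]
    positivity
end

section
/- In the setting of the previous statement, the averaged matrix-valued function F̄(x,μ) = ∫ F(x,μ,y) ν^{x,μ}(dy) is globally Lipschitz: there is C > 0 such that ‖F̄(x₁,μ₁) − F̄(x₂,μ₂)‖ ≤ C(|x₁−x₂| + 𝕎₂(μ₁,μ₂)) for all x₁,x₂ ∈ ℝ^n and μ₁,μ₂ ∈ 𝒫₂. -/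
open MeasureTheory

lemma aux_pt (C D s a b c : ℝ) (hC : 0 ≤ C) (hD : 0 ≤ D) (hs : 0 < s)
    (ha : 0 ≤ a) (hb : 0 ≤ b) (hc : 0 ≤ c) :
    C * (1 + a ^ 2 + b ^ 2) * (D + c) ≤
      C * (3 * D + 9 * s / 2) + (C * (D + 3 * s / 2)) * a ^ 6
        + (C * (D + 3 * s / 2)) * b ^ 6 + (C / (2 * s)) * c ^ 2 := by
  have h1 : a ^ 2 ≤ 1 + a ^ 6 := by
    nlinarith [sq_nonneg (a^3 - a), sq_nonneg (a^2 - 1), sq_nonneg a, sq_nonneg (a^3)]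
  have h2 : b ^ 2 ≤ 1 + b ^ 6 := by
    nlinarith [sq_nonneg (b^3 - b), sq_nonneg (b^2 - 1), sq_nonneg b, sq_nonneg (b^3)]
  have h1' : a ^ 4 ≤ 1 + a ^ 6 := by
    nlinarith [sq_nonneg (a^3 - a), sq_nonneg (a^2 - 1), sq_nonneg (a^3 - a^2), sq_nonneg a]
  have h2' : b ^ 4 ≤ 1 + b ^ 6 := by
    nlinarith [sq_nonneg (b^3 - b), sq_nonneg (b^2 - 1), sq_nonneg (b^3 - b^2), sq_nonneg b]
  have hu2 : (1 + a^2 + b^2)^2 ≤ 9 + 3*a^6 + 3*b^6 := by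
    nlinarith [sq_nonneg (a^2 - b^2), sq_nonneg (a^2 - 1), sq_nonneg (b^2 - 1)]
  have h3 : (1 + a^2 + b^2) * c ≤ (s/2) * (1 + a^2 + b^2)^2 + c^2 / (2*s) := by
    have key : 0 ≤ (s * (1 + a^2 + b^2) - c)^2 := sq_nonneg _
    have h2s : (0:ℝ) < 2 * s := by linarith
    rw [← sub_nonneg]
    have : (s/2) * (1 + a^2 + b^2)^2 + c^2 / (2*s) - (1 + a^2 + b^2) * c
        = (s * (1 + a^2 + b^2) - c)^2 / (2*s) := by field_simp; ring
    rw [this]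
    positivity
  have hud : (1 + a^2 + b^2) * D ≤ (3 + a^6 + b^6) * D := by nlinarith
  have huc : C * ((1 + a^2 + b^2) * c) ≤ C * ((s/2) * (9 + 3*a^6 + 3*b^6) + c^2/(2*s)) := by
    have : (1 + a^2 + b^2) * c ≤ (s/2) * (9 + 3*a^6 + 3*b^6) + c^2/(2*s) := by
      have : (s/2) * (1 + a^2 + b^2)^2 ≤ (s/2) * (9 + 3*a^6 + 3*b^6) := by nlinarith
      linarith
    exact mul_le_mul_of_nonneg_left this hC
  have hud' : C * ((1 + a^2 + b^2) * D) ≤ C * ((3 + a^6 + b^6) * D) :=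
    mul_le_mul_of_nonneg_left hud hC
  have heq : C * (3 * D + 9 * s / 2) + (C * (D + 3 * s / 2)) * a ^ 6
        + (C * (D + 3 * s / 2)) * b ^ 6 + (C / (2 * s)) * c ^ 2
      = C * ((3 + a^6 + b^6) * D) + C * ((s/2) * (9 + 3*a^6 + 3*b^6) + c^2/(2*s)) := by
    field_simp
    ring
  nlinarith [hud', huc]

set_option maxHeartbeats 1000000 in
/-- global Lipschitz continuity of the averaged function
`F̄(x,μ) = ∫ F(x,μ,y) ν^{x,μ}(dy)` in `(x,μ)`, assuming the local Lipschitz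
estimate for `F`, the parameter-contraction estimate for the frozen process,
the moment bounds, and the exponential ergodicity estimate
`‖𝔼F(x,μ,Y_t^{x,μ,y}) − F̄(x,μ)‖ ≤ C e^{−βt/2}(1+|y|³)`. -/
theorem stmt_7 {n m : ℕ} {P V : Type*} [PseudoMetricSpace P]
    [NormedAddCommGroup V] [NormedSpace ℝ V]
    {Ω : Type*} [MeasurableSpace Ω] (ℙ : Measure Ω) [IsProbabilityMeasure ℙ]
    (F : EuclideanSpace ℝ (Fin n) → P → EuclideanSpace ℝ (Fin m) → V)
    (ν : EuclideanSpace ℝ (Fin n) → P → Measure (EuclideanSpace ℝ (Fin m)))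
    (Fbar : EuclideanSpace ℝ (Fin n) → P → V)
    (Y : EuclideanSpace ℝ (Fin n) → P → EuclideanSpace ℝ (Fin m) → ℝ → Ω →
      EuclideanSpace ℝ (Fin m))
    (C β : ℝ) (hC : 0 < C) (hβ : 0 < β)
    (hνprob : ∀ x μ, IsProbabilityMeasure (ν x μ))
    (hFbar : ∀ x μ, Fbar x μ = ∫ y, F x μ y ∂(ν x μ))
    (hFlip : ∀ x₁ x₂ : EuclideanSpace ℝ (Fin n), ∀ μ₁ μ₂ : P,
      ∀ y₁ y₂ : EuclideanSpace ℝ (Fin m),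
      ‖F x₁ μ₁ y₁ - F x₂ μ₂ y₂‖ ≤
        C * (1 + ‖y₁‖ ^ 2 + ‖y₂‖ ^ 2) * (‖x₁ - x₂‖ + dist μ₁ μ₂ + ‖y₁ - y₂‖))
    (hY6 : ∀ x μ y, ∀ t, 0 ≤ t →
      (∫ ω, ‖Y x μ y t ω‖ ^ 6 ∂ℙ) ≤ Real.exp (-β * t) * ‖y‖ ^ 6 + C)
    (hY6int : ∀ x μ y, ∀ t, 0 ≤ t → Integrable (fun ω => ‖Y x μ y t ω‖ ^ 6) ℙ)
    -- parameter-contraction estimate, uniform in time, same starting point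
    (hparam : ∀ x₁ x₂ : EuclideanSpace ℝ (Fin n), ∀ μ₁ μ₂ : P,
      ∀ y : EuclideanSpace ℝ (Fin m), ∀ t, 0 ≤ t →
      (∫ ω, ‖Y x₁ μ₁ y t ω - Y x₂ μ₂ y t ω‖ ^ 2 ∂ℙ) ≤
        C * (‖x₁ - x₂‖ ^ 2 + dist μ₁ μ₂ ^ 2))
    (hparamint : ∀ x₁ x₂ : EuclideanSpace ℝ (Fin n), ∀ μ₁ μ₂ : P,
      ∀ y : EuclideanSpace ℝ (Fin m), ∀ t, 0 ≤ t →
      Integrable (fun ω => ‖Y x₁ μ₁ y t ω - Y x₂ μ₂ y t ω‖ ^ 2) ℙ)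
    (hFint : ∀ x μ y, ∀ t, 0 ≤ t → Integrable (fun ω => F x μ (Y x μ y t ω)) ℙ)
    -- exponential ergodicity estimate
    (herg : ∀ x μ y, ∀ t, 0 < t →
      ‖(∫ ω, F x μ (Y x μ y t ω) ∂ℙ) - Fbar x μ‖ ≤
        C * Real.exp (-β * t / 2) * (1 + ‖y‖ ^ 3)) :
    ∃ C' > (0:ℝ), ∀ x₁ x₂ : EuclideanSpace ℝ (Fin n), ∀ μ₁ μ₂ : P,
      ‖Fbar x₁ μ₁ - Fbar x₂ μ₂‖ ≤ C' * (‖x₁ - x₂‖ + dist μ₁ μ₂) := by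
  classical
  set K : ℝ := (15/2)*C + (11/2)*C^2 with hKdef
  have hKpos : 0 < K := by positivity
  refine ⟨K + 1, by linarith, ?_⟩
  clear_value K
  intro x₁ x₂ μ₁ μ₂
  set D : ℝ := ‖x₁ - x₂‖ + dist μ₁ μ₂ with hDdef
  have hD0 : 0 ≤ D := by rw [hDdef]; positivity
  clear_value D
  refine le_of_forall_pos_le_add ?_
  intro ε' hε'
  set ε : ℝ := ε' / (K + 1) with hεdef
  have hε0 : 0 < ε := by rw [hεdef]; positivity
  have hεeq : (K + 1) * ε = ε' := by
    rw [hεdef, mul_comm, div_mul_cancel₀ ε' (by linarith : K + 1 ≠ 0)]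
  clear_value ε
  set s : ℝ := D + ε with hsdef
  have hs0 : 0 < s := by rw [hsdef]; linarith
  have hDs : D ≤ s := by rw [hsdef]; linarith
  clear_value s
  -- choose t large
  set t : ℝ := max 1 (-2 * Real.log (ε / (2*C)) / β) with htdef
  have ht0 : (0:ℝ) < t := lt_of_lt_of_le one_pos (le_max_left _ _)
  have hexp : C * Real.exp (-β * t / 2) ≤ ε / 2 := by
    have h1 : -2 * Real.log (ε / (2*C)) / β ≤ t := le_max_right _ _
    have h2 : -β * t / 2 ≤ Real.log (ε / (2*C)) := by
      rw [div_le_iff₀ hβ] at h1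
      nlinarith
    have h3 := Real.exp_le_exp.mpr h2
    rw [Real.exp_log (by positivity)] at h3
    calc C * Real.exp (-β * t / 2) ≤ C * (ε / (2*C)) :=
          mul_le_mul_of_nonneg_left h3 hC.le
      _ = ε / 2 := by field_simp
  clear_value t
  set Y₁ : Ω → EuclideanSpace ℝ (Fin m) := Y x₁ μ₁ 0 t with hY₁def
  set Y₂ : Ω → EuclideanSpace ℝ (Fin m) := Y x₂ μ₂ 0 t with hY₂def
  -- ergodicity
  have herg1 : ‖(∫ ω, F x₁ μ₁ (Y₁ ω) ∂ℙ) - Fbar x₁ μ₁‖ ≤ C * Real.exp (-β * t / 2) := by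
    simpa using herg x₁ μ₁ 0 t ht0
  have herg2 : ‖(∫ ω, F x₂ μ₂ (Y₂ ω) ∂ℙ) - Fbar x₂ μ₂‖ ≤ C * Real.exp (-β * t / 2) := by
    simpa using herg x₂ μ₂ 0 t ht0
  -- moments
  have hA1 : (∫ ω, ‖Y₁ ω‖ ^ 6 ∂ℙ) ≤ C := by simpa using hY6 x₁ μ₁ 0 t ht0.le
  have hA2 : (∫ ω, ‖Y₂ ω‖ ^ 6 ∂ℙ) ≤ C := by simpa using hY6 x₂ μ₂ 0 t ht0.le
  have hB : (∫ ω, ‖Y₁ ω - Y₂ ω‖ ^ 2 ∂ℙ) ≤ C * D ^ 2 := by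
    have h := hparam x₁ x₂ μ₁ μ₂ 0 t ht0.le
    have h2 : ‖x₁ - x₂‖ ^ 2 + dist μ₁ μ₂ ^ 2 ≤ D ^ 2 := by
      have h3 : (0:ℝ) ≤ ‖x₁ - x₂‖ := norm_nonneg _
      have h4 : (0:ℝ) ≤ dist μ₁ μ₂ := dist_nonneg
      rw [hDdef]; nlinarith
    calc (∫ ω, ‖Y₁ ω - Y₂ ω‖ ^ 2 ∂ℙ) ≤ C * (‖x₁ - x₂‖ ^ 2 + dist μ₁ μ₂ ^ 2) := h
      _ ≤ C * D ^ 2 := mul_le_mul_of_nonneg_left h2 hC.le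
  have hI1 : Integrable (fun ω => ‖Y₁ ω‖ ^ 6) ℙ := hY6int x₁ μ₁ 0 t ht0.le
  have hI2 : Integrable (fun ω => ‖Y₂ ω‖ ^ 6) ℙ := hY6int x₂ μ₂ 0 t ht0.le
  have hI3 : Integrable (fun ω => ‖Y₁ ω - Y₂ ω‖ ^ 2) ℙ := hparamint x₁ x₂ μ₁ μ₂ 0 t ht0.le
  have hIF1 : Integrable (fun ω => F x₁ μ₁ (Y₁ ω)) ℙ := hFint x₁ μ₁ 0 t ht0.le
  have hIF2 : Integrable (fun ω => F x₂ μ₂ (Y₂ ω)) ℙ := hFint x₂ μ₂ 0 t ht0.le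
  have hFlip12 : ∀ ω, ‖F x₁ μ₁ (Y₁ ω) - F x₂ μ₂ (Y₂ ω)‖ ≤
      C * (1 + ‖Y₁ ω‖ ^ 2 + ‖Y₂ ω‖ ^ 2) * (D + ‖Y₁ ω - Y₂ ω‖) := by
    intro ω
    have := hFlip x₁ x₂ μ₁ μ₂ (Y₁ ω) (Y₂ ω)
    rw [hDdef]
    simpa [add_assoc] using this
  clear_value Y₁ Y₂
  clear hY₁def hY₂def htdef
  -- the dominating function
  set K₀ : ℝ := C * (3 * D + 9 * s / 2) with hK₀def
  set K₁ : ℝ := C * (D + 3 * s / 2) with hK₁def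
  set K₃ : ℝ := C / (2 * s) with hK₃def
  have hK₁0 : 0 ≤ K₁ := by rw [hK₁def]; positivity
  have hK₃0 : 0 ≤ K₃ := by rw [hK₃def]; positivity
  have h12 : Integrable (fun ω => K₀ + K₁ * ‖Y₁ ω‖ ^ 6) ℙ :=
    (integrable_const K₀).add (hI1.const_mul K₁)
  have h123 : Integrable (fun ω => K₀ + K₁ * ‖Y₁ ω‖ ^ 6 + K₁ * ‖Y₂ ω‖ ^ 6) ℙ :=
    h12.add (hI2.const_mul K₁)
  have hInt : Integrable
      (fun ω => K₀ + K₁ * ‖Y₁ ω‖ ^ 6 + K₁ * ‖Y₂ ω‖ ^ 6 + K₃ * ‖Y₁ ω - Y₂ ω‖ ^ 2) ℙ :=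
    h123.add (hI3.const_mul K₃)
  clear_value K₀ K₁ K₃
  have hIntEq : (∫ ω, (K₀ + K₁ * ‖Y₁ ω‖ ^ 6 + K₁ * ‖Y₂ ω‖ ^ 6 + K₃ * ‖Y₁ ω - Y₂ ω‖ ^ 2) ∂ℙ)
      = K₀ + K₁ * (∫ ω, ‖Y₁ ω‖ ^ 6 ∂ℙ) + K₁ * (∫ ω, ‖Y₂ ω‖ ^ 6 ∂ℙ)
        + K₃ * (∫ ω, ‖Y₁ ω - Y₂ ω‖ ^ 2 ∂ℙ) := by
    have e1 : (∫ ω, (K₀ + K₁ * ‖Y₁ ω‖ ^ 6 + K₁ * ‖Y₂ ω‖ ^ 6 + K₃ * ‖Y₁ ω - Y₂ ω‖ ^ 2) ∂ℙ)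
        = (∫ ω, (K₀ + K₁ * ‖Y₁ ω‖ ^ 6 + K₁ * ‖Y₂ ω‖ ^ 6) ∂ℙ)
          + ∫ ω, K₃ * ‖Y₁ ω - Y₂ ω‖ ^ 2 ∂ℙ := integral_add h123 (hI3.const_mul K₃)
    have e2 : (∫ ω, (K₀ + K₁ * ‖Y₁ ω‖ ^ 6 + K₁ * ‖Y₂ ω‖ ^ 6) ∂ℙ)
        = (∫ ω, (K₀ + K₁ * ‖Y₁ ω‖ ^ 6) ∂ℙ) + ∫ ω, K₁ * ‖Y₂ ω‖ ^ 6 ∂ℙ :=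
      integral_add h12 (hI2.const_mul K₁)
    have e3 : (∫ ω, (K₀ + K₁ * ‖Y₁ ω‖ ^ 6) ∂ℙ)
        = (∫ ω, (K₀ : ℝ) ∂ℙ) + ∫ ω, K₁ * ‖Y₁ ω‖ ^ 6 ∂ℙ :=
      integral_add (integrable_const K₀) (hI1.const_mul K₁)
    rw [e1, e2, e3, integral_const_mul, integral_const_mul, integral_const_mul, integral_const]
    simp
  -- middle term
  have hmid : ‖(∫ ω, F x₁ μ₁ (Y₁ ω) ∂ℙ) - (∫ ω, F x₂ μ₂ (Y₂ ω) ∂ℙ)‖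
      ≤ K₀ + K₁ * (∫ ω, ‖Y₁ ω‖ ^ 6 ∂ℙ) + K₁ * (∫ ω, ‖Y₂ ω‖ ^ 6 ∂ℙ)
        + K₃ * (∫ ω, ‖Y₁ ω - Y₂ ω‖ ^ 2 ∂ℙ) := by
    rw [← integral_sub hIF1 hIF2, ← hIntEq]
    refine norm_integral_le_of_norm_le hInt (Filter.Eventually.of_forall fun ω => ?_)
    have haux := aux_pt C D s (‖Y₁ ω‖) (‖Y₂ ω‖) (‖Y₁ ω - Y₂ ω‖) hC.le hD0 hs0
      (norm_nonneg _) (norm_nonneg _) (norm_nonneg _)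
    rw [hK₀def, hK₁def, hK₃def]
    exact (hFlip12 ω).trans haux
  -- numeric bound
  have hK3B : K₃ * (∫ ω, ‖Y₁ ω - Y₂ ω‖ ^ 2 ∂ℙ) ≤ C ^ 2 / 2 * s := by
    have h5 : K₃ * (∫ ω, ‖Y₁ ω - Y₂ ω‖ ^ 2 ∂ℙ) ≤ K₃ * (C * D ^ 2) :=
      mul_le_mul_of_nonneg_left hB hK₃0
    have h6 : K₃ * (C * D ^ 2) ≤ C ^ 2 / 2 * s := by
      rw [hK₃def, div_mul_eq_mul_div, div_le_iff₀ (by linarith : (0:ℝ) < 2 * s)]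
      nlinarith [mul_le_mul hDs hDs hD0 (hD0.trans hDs), sq_nonneg C, hC.le, hs0]
    linarith
  have hbound : K₀ + K₁ * (∫ ω, ‖Y₁ ω‖ ^ 6 ∂ℙ) + K₁ * (∫ ω, ‖Y₂ ω‖ ^ 6 ∂ℙ)
      + K₃ * (∫ ω, ‖Y₁ ω - Y₂ ω‖ ^ 2 ∂ℙ) ≤ K * s := by
    have h7 : K₁ * (∫ ω, ‖Y₁ ω‖ ^ 6 ∂ℙ) ≤ K₁ * C := mul_le_mul_of_nonneg_left hA1 hK₁0
    have h8 : K₁ * (∫ ω, ‖Y₂ ω‖ ^ 6 ∂ℙ) ≤ K₁ * C := mul_le_mul_of_nonneg_left hA2 hK₁0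
    have h9 : K₁ * C ≤ C * (5 * s / 2) * C := by
      have hle : K₁ ≤ C * (5 * s / 2) := by
        rw [hK₁def]; apply mul_le_mul_of_nonneg_left _ hC.le; linarith
      exact mul_le_mul_of_nonneg_right hle hC.le
    have h10 : K₀ ≤ C * (15 * s / 2) := by
      rw [hK₀def]; apply mul_le_mul_of_nonneg_left _ hC.le; linarith
    rw [hKdef]
    nlinarith [hK3B]
  -- assemble
  have htri := dist_triangle4 (Fbar x₁ μ₁) (∫ ω, F x₁ μ₁ (Y₁ ω) ∂ℙ)
    (∫ ω, F x₂ μ₂ (Y₂ ω) ∂ℙ) (Fbar x₂ μ₂)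
  simp only [dist_eq_norm] at htri
  have herg1' : ‖Fbar x₁ μ₁ - (∫ ω, F x₁ μ₁ (Y₁ ω) ∂ℙ)‖ ≤ C * Real.exp (-β * t / 2) := by
    rw [norm_sub_rev]; exact herg1
  have hfin : ‖Fbar x₁ μ₁ - Fbar x₂ μ₂‖ ≤ ε + K * s := by
    have hm := hmid.trans hbound
    calc ‖Fbar x₁ μ₁ - Fbar x₂ μ₂‖
        ≤ ‖Fbar x₁ μ₁ - (∫ ω, F x₁ μ₁ (Y₁ ω) ∂ℙ)‖
          + ‖(∫ ω, F x₁ μ₁ (Y₁ ω) ∂ℙ) - (∫ ω, F x₂ μ₂ (Y₂ ω) ∂ℙ)‖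
          + ‖(∫ ω, F x₂ μ₂ (Y₂ ω) ∂ℙ) - Fbar x₂ μ₂‖ := htri
      _ ≤ C * Real.exp (-β * t / 2) + K * s + C * Real.exp (-β * t / 2) := by
          gcongr
      _ ≤ ε + K * s := by linarith
  calc ‖Fbar x₁ μ₁ - Fbar x₂ μ₂‖ ≤ ε + K * s := hfin
    _ = K * D + (K + 1) * ε := by rw [hsdef]; ring
    _ ≤ (K + 1) * D + ε' := by rw [hεeq]; nlinarith
end
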